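/- arXiv:1809.10344 — 4 statements merged into one kernel-verified Lean document; each statement's English description precedes it below -/
import Mathlib

section
/- If an integer six-tuple (a₀₁, a₀₂, a₀₃, a₁₂, a₁₃, a₂₃) lies in Γ, then its image under the map v, namely (a₀₁, a₀₃, a₀₂, a₀₁a₀₃ − a₁₃, a₀₁a₀₂ − a₁₂, a₂₃), also lies in Γ. -/
/-- Integer six-tuples (a₀₁, a₀₂, a₀₃, a₁₂, a₁₃, a₂₃). -/
abbrev Z6 : Type := ℤ × ℤ × ℤ × ℤ × ℤ × ℤ

/-- Membership in Γ: the two polynomial equations (1) and (2). -/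
def inGamma : Z6 → Prop := fun (a01, a02, a03, a12, a13, a23) =>
  a01 ^ 2 + a02 ^ 2 + a03 ^ 2 + a12 ^ 2 + a13 ^ 2 + a23 ^ 2
      - a01 * a02 * a12 - a01 * a03 * a13 - a02 * a03 * a23 - a12 * a13 * a23
      + a01 * a03 * a12 * a23 - 8 = 0 ∧
  a01 ^ 2 * a23 ^ 2 + a02 ^ 2 * a13 ^ 2 + a03 ^ 2 * a12 ^ 2
      - 2 * a01 * a02 * a13 * a23 - 2 * a02 * a03 * a12 * a13
      + 2 * a01 * a03 * a12 * a23 - 16 = 0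

/-- The map v. -/
def vMap : Z6 → Z6 := fun (a01, a02, a03, a12, a13, a23) =>
  (a01, a03, a02, a01 * a03 - a13, a01 * a02 - a12, a23)

/-- The map w₂. -/
def w2Map : Z6 → Z6 := fun (a01, a02, a03, a12, a13, a23) =>
  (a03, a13, a23, a01, a02, a12)

/-- The map w₃. -/
def w3Map : Z6 → Z6 := fun (a01, a02, a03, a12, a13, a23) =>
  (a23, a13, a03, a12, a02, a01)

/-- Γ is invariant under v. -/
theorem gamma_invariant_v (a : Z6) (ha : inGamma a) : inGamma (vMap a) := by
  obtain ⟨a01,a02,a03,a12,a13,a23⟩ := a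
  obtain ⟨h1,h2⟩ := ha
  simp only [inGamma, vMap] at *
  exact ⟨by linear_combination h1, by linear_combination h2⟩
end

section
/- For every a ∈ Γ, the composite map v ∘ w₃ ∘ w₂ ∘ w₂ ∘ w₂ applied three times to a returns a, and the composite map v ∘ w₃ ∘ v ∘ w₂ ∘ w₂ applied twice to a returns a; that is, (v∘w₃∘w₂³)³ and (v∘w₃∘v∘w₂²)² restrict to the identity on Γ. -/
/-- On Γ, (v∘w₃∘w₂³)³ and (v∘w₃∘v∘w₂²)² act as the identity. -/
theorem gamma_composite_identity (a : Z6) (ha : inGamma a) :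
    (vMap ∘ w3Map ∘ w2Map ∘ w2Map ∘ w2Map)^[3] a = a ∧
    (vMap ∘ w3Map ∘ vMap ∘ w2Map ∘ w2Map)^[2] a = a := by
  obtain ⟨a01, a02, a03, a12, a13, a23⟩ := a
  constructor <;>
    simp only [Function.iterate_succ, Function.iterate_zero, Function.comp_apply, id_eq,
      vMap, w2Map, w3Map, Prod.mk.injEq] <;>
    ring_nf <;>
    exact ⟨trivial, trivial, trivial, trivial, trivial, trivial⟩
end

section
/- In the group G, the subgroup generated by the elements w₂ and w₃ is isomorphic to the dihedral group of order 8. -/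
/-- The relations for the group G with generators v (index 0), w₂ (index 1), w₃ (index 2):
v² = w₂⁴ = w₃² = 1, w₃⁻¹w₂w₃ = w₂⁻¹, (vw₃w₂³)³ = 1, (vw₃vw₂²)² = 1. -/
def GRels : Set (FreeGroup (Fin 3)) :=
  {FreeGroup.of 0 ^ 2, FreeGroup.of 1 ^ 4, FreeGroup.of 2 ^ 2,
   (FreeGroup.of 2)⁻¹ * FreeGroup.of 1 * FreeGroup.of 2 * FreeGroup.of 1,
   (FreeGroup.of 0 * FreeGroup.of 2 * FreeGroup.of 1 ^ 3) ^ 3,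
   (FreeGroup.of 0 * FreeGroup.of 2 * FreeGroup.of 0 * FreeGroup.of 1 ^ 2) ^ 2}

/-- The group G. -/
abbrev GGrp : Type := PresentedGroup GRels

/-- The generator v of G. -/
def gv : GGrp := PresentedGroup.of 0

/-- The generator w₂ of G. -/
def gw2 : GGrp := PresentedGroup.of 1

/-- The generator w₃ of G. -/
def gw3 : GGrp := PresentedGroup.of 2

/- ## Auxiliary material -/

lemma grel_one {x : FreeGroup (Fin 3)} (hx : x ∈ GRels) :
    PresentedGroup.mk GRels x = 1 :=
  (QuotientGroup.eq_one_iff x).2 (Subgroup.subset_normalClosure hx)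

lemma gw2_pow_four : gw2 ^ 4 = 1 := by
  have h := grel_one (x := FreeGroup.of 1 ^ 4) (by simp [GRels])
  simpa [gw2, PresentedGroup.of, map_pow] using h

lemma gw3_sq : gw3 ^ 2 = 1 := by
  have h := grel_one (x := FreeGroup.of 2 ^ 2) (by simp [GRels])
  simpa [gw3, PresentedGroup.of, map_pow] using h

lemma gw_conj : gw3⁻¹ * gw2 * gw3 * gw2 = 1 := by
  have h := grel_one (x := (FreeGroup.of 2)⁻¹ * FreeGroup.of 1 * FreeGroup.of 2 * FreeGroup.of 1)
    (by simp [GRels])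
  simpa [gw2, gw3, PresentedGroup.of, map_mul, map_inv] using h

/-- The basic "rotation power" function. -/
def gf (i : ZMod 4) : GGrp := gw2 ^ i.val

lemma gw2_pow_mod (m : ℕ) : gw2 ^ (m % 4) = gw2 ^ m := by
  conv_rhs => rw [← Nat.mod_add_div m 4]
  rw [pow_add, pow_mul, gw2_pow_four, one_pow, mul_one]

lemma gf_add (i j : ZMod 4) : gf (i + j) = gf i * gf j := by
  unfold gf
  rw [ZMod.val_add, gw2_pow_mod, pow_add]

lemma gf_zero : gf 0 = 1 := by simp [gf]

lemma gf_neg (i : ZMod 4) : gf (-i) = (gf i)⁻¹ := by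
  have : gf (-i) * gf i = 1 := by rw [← gf_add, neg_add_cancel, gf_zero]
  exact eq_inv_of_mul_eq_one_left this

lemma gconj_pow (k : ℕ) : gw3⁻¹ * gw2 ^ k * gw3 = (gw2 ^ k)⁻¹ := by
  have h1 : gw3⁻¹ * gw2 * gw3 = gw2⁻¹ := mul_eq_one_iff_eq_inv.mp gw_conj
  have h2 : (gw3⁻¹ * gw2 * gw3⁻¹⁻¹) ^ k = gw3⁻¹ * gw2 ^ k * gw3⁻¹⁻¹ := conj_pow
  rw [inv_inv] at h2
  rw [← h2, h1, inv_pow]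

lemma gf_mul_gw3 (i : ZMod 4) : gf i * gw3 = gw3 * gf (-i) := by
  have h3 : gw3⁻¹ = gw3 := by
    have : gw3 * gw3 = 1 := by rw [← sq]; exact gw3_sq
    exact inv_eq_of_mul_eq_one_right this
  have := gconj_pow (i.val)
  rw [h3] at this
  rw [gf_neg]
  unfold gf
  calc gw2 ^ i.val * gw3 = gw3 * (gw3 * gw2 ^ i.val * gw3) := by
        rw [← mul_assoc, ← mul_assoc, ← sq, gw3_sq, one_mul]
    _ = gw3 * (gw2 ^ i.val)⁻¹ := by rw [this]

/-- The map from the dihedral group into G. -/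
def psiFun : DihedralGroup 4 → GGrp
  | .r i => gf i
  | .sr i => gw3 * gf i

lemma psiFun_mul (x y : DihedralGroup 4) : psiFun (x * y) = psiFun x * psiFun y := by
  rcases x with i | i <;> rcases y with j | j <;>
    simp only [DihedralGroup.r_mul_r, DihedralGroup.r_mul_sr, DihedralGroup.sr_mul_r,
      DihedralGroup.sr_mul_sr, psiFun]
  · exact gf_add i j
  · rw [show j - i = -i + j by ring, gf_add, ← mul_assoc, ← mul_assoc, gf_mul_gw3]
  · rw [gf_add, mul_assoc]
  · rw [show j - i = -i + j by ring, gf_add]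
    rw [mul_assoc gw3 (gf i) (gw3 * gf j), ← mul_assoc (gf i) gw3 (gf j), gf_mul_gw3,
      mul_assoc gw3 (gf (-i)) (gf j), ← mul_assoc gw3 gw3 _, ← sq, gw3_sq, one_mul]

/-- The monoid hom from the dihedral group into G. -/
def psi : DihedralGroup 4 →* GGrp := MonoidHom.mk' psiFun psiFun_mul

/-- The images of the generators of G in the dihedral group. -/
def dmap : Fin 3 → DihedralGroup 4 := ![.sr 3, .r 1, .sr 0]

lemma dmap_rels : ∀ x ∈ GRels, FreeGroup.lift dmap x = 1 := by
  intro x hx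
  simp only [GRels, Set.mem_insert_iff, Set.mem_singleton_iff] at hx
  rcases hx with rfl | rfl | rfl | rfl | rfl | rfl <;>
    · simp only [map_mul, map_pow, map_inv, FreeGroup.lift_apply_of, dmap]
      decide

/-- The retraction from G to the dihedral group. -/
def phi : GGrp →* DihedralGroup 4 := PresentedGroup.toGroup dmap_rels

lemma phi_gw2_pow (k : ℕ) : phi (gw2 ^ k) = DihedralGroup.r (k : ZMod 4) := by
  rw [map_pow]
  have : phi gw2 = DihedralGroup.r 1 := PresentedGroup.toGroup.of dmap_rels
  rw [this, DihedralGroup.r_one_pow]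

lemma phi_psi (x : DihedralGroup 4) : phi (psi x) = x := by
  have hval : ∀ i : ZMod 4, ((i.val : ℕ) : ZMod 4) = i := fun i => by rw [ZMod.natCast_val, ZMod.cast_id]
  rcases x with i | i
  · show phi (gf i) = _
    unfold gf
    rw [phi_gw2_pow, hval]
  · show phi (gw3 * gf i) = _
    have h3 : phi gw3 = DihedralGroup.sr 0 := PresentedGroup.toGroup.of dmap_rels
    unfold gf
    rw [map_mul, h3, phi_gw2_pow, hval, DihedralGroup.sr_mul_r, zero_add]

lemma psi_inj : Function.Injective psi :=
  Function.LeftInverse.injective phi_psi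

lemma psi_range : psi.range = Subgroup.closure {gw2, gw3} := by
  apply le_antisymm
  · rintro _ ⟨x, rfl⟩
    have h2 : gw2 ∈ Subgroup.closure ({gw2, gw3} : Set GGrp) :=
      Subgroup.subset_closure (Set.mem_insert _ _)
    have h3 : gw3 ∈ Subgroup.closure ({gw2, gw3} : Set GGrp) :=
      Subgroup.subset_closure (Set.mem_insert_of_mem _ rfl)
    rcases x with i | i
    · exact pow_mem h2 _
    · exact mul_mem h3 (pow_mem h2 _)
  · rw [Subgroup.closure_le]
    rintro x (rfl | rfl)
    · exact ⟨.r 1, by show gf 1 = _; rw [gf, show (1 : ZMod 4).val = 1 from rfl, pow_one]⟩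
    · exact ⟨.sr 0, by show gw3 * gf 0 = _; simp [gf_zero]⟩

/-- The subgroup of G generated by w₂ and w₃ is isomorphic to the dihedral group of order 8. -/
theorem subgroup_w2_w3_dihedral :
    Nonempty ((Subgroup.closure {gw2, gw3} : Subgroup GGrp) ≃* DihedralGroup 4) := by
  exact ⟨(MulEquiv.subgroupCongr psi_range.symm).trans (MonoidHom.ofInjective psi_inj).symm⟩
end

section
/- Fix integers n ≥ 1 and k with 0 ≤ k ≤ n − 1. The set of tuples (φ₀, …, φₙ) ∈ ℝⁿ⁺¹ satisfying (i) φᵢ < φⱼ − (j − i − 1) for all 0 ≤ i < j ≤ n, (ii) φ_{k+1} < φ_k + 1, and (iii) φ_{k+1} < φ_{k+i} − (i − 1) for every integer i ≥ 2 with k + i ≤ n, is a nonempty open convex subset of ℝⁿ⁺¹ (in particular it is path connected and simply connected). -/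
lemma phase_aux_open {m : ℕ} (a b : Fin m) (c : ℝ) :
    IsOpen {φ : Fin m → ℝ | φ a < φ b + c} :=
  isOpen_lt (continuous_apply a) ((continuous_apply b).add continuous_const)

lemma phase_aux_convex {m : ℕ} (a b : Fin m) (c : ℝ) :
    Convex ℝ {φ : Fin m → ℝ | φ a < φ b + c} := by
  have h : {φ : Fin m → ℝ | φ a < φ b + c} = {φ : Fin m → ℝ | φ a - φ b < c} := by
    ext φ; constructor <;> intro h <;> simp only [Set.mem_setOf_eq] at * <;> linarith
  rw [h]
  exact convex_halfSpace_lt ⟨fun x y => by simp; ring, fun s x => by simp; ring⟩ c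

/-- The phase region describing Θ_𝓔 ∩ Θ_{𝓡ₖ𝓔}: for n ≥ 1 and 0 ≤ k ≤ n − 1, the set of
(φ₀, …, φₙ) ∈ ℝⁿ⁺¹ with (i) φᵢ < φⱼ − (j − i − 1) for i < j, (ii) φ_{k+1} < φ_k + 1, and
(iii) φ_{k+1} < φ_{k+i} − (i − 1) for all i ≥ 2 with k + i ≤ n, is a nonempty open convex
subset of ℝⁿ⁺¹ (in particular path connected and simply connected). -/
theorem phase_region_nonempty_open_convex (n k : ℕ) (hn : 1 ≤ n) (hk : k ≤ n - 1) :
    let S : Set (Fin (n + 1) → ℝ) :=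
      {φ | (∀ i j : Fin (n + 1), (i : ℕ) < (j : ℕ) →
              φ i < φ j - (((j : ℕ) : ℝ) - ((i : ℕ) : ℝ) - 1)) ∧
           φ ⟨k + 1, by omega⟩ < φ ⟨k, by omega⟩ + 1 ∧
           ∀ i : ℕ, 2 ≤ i → (h : k + i ≤ n) →
              φ ⟨k + 1, by omega⟩ < φ ⟨k + i, by omega⟩ - ((i : ℝ) - 1)}
    S.Nonempty ∧ IsOpen S ∧ Convex ℝ S := by
  intro S
  have hrepr : S =
      (⋂ (i : Fin (n+1)) (j : Fin (n+1)) (_ : (i : ℕ) < (j : ℕ)),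
        {φ : Fin (n+1) → ℝ | φ i < φ j + (1 + ((i : ℕ) : ℝ) - ((j : ℕ) : ℝ))}) ∩
      {φ : Fin (n+1) → ℝ | φ ⟨k + 1, by omega⟩ < φ ⟨k, by omega⟩ + 1} ∩
      ⋂ (i : Fin (n+1)) (_ : 2 ≤ (i : ℕ)) (_ : k + (i : ℕ) ≤ n),
        {φ : Fin (n+1) → ℝ | φ ⟨k + 1, by omega⟩ <
          φ ⟨k + (i : ℕ), by omega⟩ + (1 - ((i : ℕ) : ℝ))} := by
    ext φ
    simp only [S, Set.mem_setOf_eq, Set.mem_inter_iff, Set.mem_iInter]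
    constructor
    · rintro ⟨h1, h2, h3⟩
      refine ⟨⟨fun i j hij => ?_, h2⟩, fun i hi h => ?_⟩
      · have := h1 i j hij; linarith
      · have := h3 i.val hi h; linarith
    · rintro ⟨⟨h1, h2⟩, h3⟩
      refine ⟨fun i j hij => ?_, h2, fun i hi h => ?_⟩
      · have := h1 i j hij; linarith
      · have := h3 ⟨i, by omega⟩ hi h
        simp only [Fin.val_mk] at this; linarith
  refine ⟨⟨fun i => 2 * (i : ℕ) - (if k < (i : ℕ) then (3/2 : ℝ) else 0), ?_, ?_, ?_⟩, ?_, ?_⟩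
  · -- condition (i)
    intro i j hij
    have hcast : ((i : ℕ) : ℝ) + 1 ≤ ((j : ℕ) : ℝ) := by exact_mod_cast hij
    by_cases hki : k < (i : ℕ)
    · have hkj : k < (j : ℕ) := lt_trans hki hij
      simp only [if_pos hki, if_pos hkj]; linarith
    · by_cases hkj : k < (j : ℕ)
      · simp only [if_neg hki, if_pos hkj]; linarith
      · simp only [if_neg hki, if_neg hkj]; linarith
  · -- condition (ii)
    simp only [Fin.val_mk]
    rw [if_pos (by omega : k < k + 1), if_neg (lt_irrefl k)]
    push_cast; linarith
  · -- condition (iii)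
    intro i hi h
    simp only [Fin.val_mk]
    rw [if_pos (by omega : k < k + 1), if_pos (by omega : k < k + i)]
    have : (2 : ℝ) ≤ (i : ℕ) := by exact_mod_cast hi
    push_cast; linarith
  · rw [hrepr]
    refine IsOpen.inter (IsOpen.inter ?_ (phase_aux_open _ _ 1)) ?_
    · exact isOpen_iInter_of_finite fun i => isOpen_iInter_of_finite fun j =>
        isOpen_iInter_of_finite fun _ => phase_aux_open _ _ _
    · exact isOpen_iInter_of_finite fun i => isOpen_iInter_of_finite fun _ =>
        isOpen_iInter_of_finite fun _ => phase_aux_open _ _ _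
  · rw [hrepr]
    refine Convex.inter (Convex.inter ?_ (phase_aux_convex _ _ 1)) ?_
    · exact convex_iInter fun i => convex_iInter fun j =>
        convex_iInter fun _ => phase_aux_convex _ _ _
    · exact convex_iInter fun i => convex_iInter fun _ =>
        convex_iInter fun _ => phase_aux_convex _ _ _
end
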